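/- arXiv:2110.05405 — 8 statements merged into one kernel-verified Lean document; each statement's English description precedes it below -/
import Mathlib

section
/- If a finite simple graph G is word-representable, then there exists a uniform word representing G (i.e., a word representing G in which every vertex occurs the same number of times). -/
namespace WordRepr

variable {V : Type*}

/-- Two letters `x` and `y` alternate in a word `w` if in the subsequence of `w`
formed by all occurrences of `x` and `y`, no two consecutive letters are equal. -/
def Alternates [DecidableEq V] (w : List V) (x y : V) : Prop :=
  List.Chain' (· ≠ ·) (w.filter fun z => decide (z = x ∨ z = y))

/-- A word `w` represents the graph `G` if every vertex occurs in `w`, and two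
distinct vertices alternate in `w` iff they are adjacent in `G`. -/
def Represents [DecidableEq V] (G : SimpleGraph V) (w : List V) : Prop :=
  (∀ v : V, v ∈ w) ∧ ∀ x y : V, x ≠ y → (Alternates w x y ↔ G.Adj x y)

/-- A graph is word-representable if some word represents it. -/
def WordRepresentable [DecidableEq V] (G : SimpleGraph V) : Prop :=
  ∃ w : List V, Represents G w

/-- A word is uniform if every letter occurring in it occurs the same number of times. -/
def Uniform [DecidableEq V] (w : List V) : Prop :=
  ∀ x y : V, x ∈ w → y ∈ w → w.count x = w.count y

/-- `o` is an orientation of `G`: every oriented pair is an edge, and every edge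
gets exactly one of its two directions. -/
def IsOrientationOf (G : SimpleGraph V) (o : V → V → Prop) : Prop :=
  (∀ x y : V, o x y → G.Adj x y) ∧ ∀ x y : V, G.Adj x y → (o x y ↔ ¬ o y x)

/-- A relation is acyclic if it has no directed cycle. -/
def Acyclic (o : V → V → Prop) : Prop :=
  ∀ v : V, ¬ Relation.TransGen o v v

/-- An orientation of `G` is semi-transitive if it is acyclic and for every
directed path `p 0 → p 1 → ⋯ → p k` whose endpoints are adjacent in `G`,
all the edges `p i → p j` (`i < j`) are present and oriented forwards. -/
def SemiTransitive (G : SimpleGraph V) (o : V → V → Prop) : Prop :=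
  IsOrientationOf G o ∧ Acyclic o ∧
    ∀ (k : ℕ) (p : Fin (k + 1) → V),
      (∀ i : Fin k, o (p i.castSucc) (p i.succ)) →
      G.Adj (p 0) (p (Fin.last k)) →
      ∀ i j : Fin (k + 1), i < j → o (p i) (p j)

/-!
If `w` represents `G`, append to `w` one copy of every letter occurring fewer than `M` times,
in the order of the last occurrences of these letters in `w`. Pairs that do not alternate in `w`
still do not, since `w` is a prefix. If `x` and `y` alternate and both get appended, the one
occurring last in `w` is appended second, so the alternation continues. If only `x` gets appended,
then `x` occurs fewer times than `y`; an alternating word in `x` and `y` ending in `x` has at least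
as many `x` as `y`, so it ends in `y` and the appended `x` continues it. Taking `M = |w|` and
repeating `M` times brings every letter to exactly `M` occurrences.
-/

section

variable [DecidableEq V]

theorem _root_.List.dedup_filter (p : V → Bool) (l : List V) :
    (l.filter p).dedup = l.dedup.filter p := by
  induction l with
  | nil => rfl
  | cons a l ih =>
    by_cases hp : p a <;> by_cases ha : a ∈ l <;>
      simp [hp, ha, ih, List.dedup_cons_of_mem, List.dedup_cons_of_notMem]

theorem _root_.List.IsChain.count_le_of_head?_eq :
    ∀ {l : List V} {a c : V}, l.IsChain (· ≠ ·) → (∀ z ∈ l, z = a ∨ z = c) →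
      l.head? = some a → l.count c ≤ l.count a ∧ l.count a ≤ l.count c + 1
  | [], _, _, _, _, h => by simp at h
  | [b], a, c, _, _, h => by
    obtain rfl : b = a := by simpa using h
    simp only [List.count_singleton, beq_iff_eq, beq_self_eq_true, if_true]
    split_ifs <;> omega
  | b :: d :: l, a, c, hl, hmem, h => by
    obtain rfl : b = a := by simpa using h
    have hdb : d ≠ b := (List.isChain_cons_cons.1 hl).1.symm
    obtain rfl : d = c := (hmem d (by simp)).resolve_left hdb
    have ih := List.IsChain.count_le_of_head?_eq (l := d :: l) (a := d) (c := b) hl.tail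
      (fun z hz => (hmem z (List.mem_cons_of_mem _ hz)).symm) rfl
    rw [List.count_cons_self, List.count_cons_of_ne hdb.symm]
    omega

theorem _root_.List.IsChain.count_le_of_getLast?_eq {l : List V} {a c : V}
    (hl : l.IsChain (· ≠ ·)) (hmem : ∀ z ∈ l, z = a ∨ z = c) (h : l.getLast? = some a) :
    l.count c ≤ l.count a := by
  simpa using (List.IsChain.count_le_of_head?_eq (l := l.reverse)
    (List.isChain_reverse.2 (hl.imp fun _ _ => Ne.symm)) (by simpa using hmem)
    (by rw [List.head?_reverse, h])).1

theorem _root_.List.IsChain.head?_dedup_eq {l : List V} {a c : V}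
    (hl : l.IsChain (· ≠ ·)) (hmem : ∀ z ∈ l, z = a ∨ z = c) (hc : c ∈ l)
    (h : l.getLast? = some a) : l.dedup.head? = some c := by
  obtain ⟨l, rfl⟩ := List.getLast?_eq_some_iff.1 h
  rcases l.eq_nil_or_concat' with rfl | ⟨l, b, rfl⟩
  · simp_all
  have hba : b ≠ a := (List.isChain_append.1 hl).2.2 b (by simp) a (by simp)
  obtain rfl : b = c := (hmem b (by simp)).resolve_left hba
  have hsub : l ⊆ [b, a] := fun z hz => by
    rcases hmem z (by simp [hz]) with rfl | rfl <;> simp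
  rw [List.append_assoc, List.singleton_append, List.Subset.dedup_append_right hsub,
    List.Nodup.dedup (by simp [hba])]
  rfl

/-- `List.dedup` keeps the last occurrence of each letter, so the appended letters come in the
order of their last occurrences in `w`. -/
def appendDeficient (M : ℕ) (w : List V) : List V :=
  w ++ w.dedup.filter fun z => w.count z < M

theorem alternates_appendDeficient_iff {M : ℕ} {w : List V} {x y : V} (hxy : x ≠ y)
    (hx : x ∈ w) (hy : y ∈ w) : Alternates (appendDeficient M w) x y ↔ Alternates w x y := by
  set p : V → Bool := fun z => decide (z = x ∨ z = y)
  set D : V → Bool := fun z => decide (w.count z < M)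
  have hfilter : (appendDeficient M w).filter p = w.filter p ++ (w.filter p).dedup.filter D := by
    rw [appendDeficient, List.filter_append, List.dedup_filter, List.filter_filter,
      List.filter_filter]
    exact congrArg _ (List.filter_congr fun z _ => Bool.and_comm _ _)
  unfold Alternates
  rw [hfilter]
  set L := w.filter p
  refine ⟨List.IsChain.left_of_append,
    fun hL => hL.append ((List.nodup_dedup L).filter D).isChain ?_⟩
  -- `a` would end `L` and also be the first appended letter among `x`, `y`
  rintro a ha b hb rfl
  have hcount : ∀ z ∈ L, L.count z = w.count z := fun z hz =>
    List.count_filter (List.mem_filter.1 hz).2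
  have hmemL : ∀ z ∈ L, z = x ∨ z = y := fun z hz => by
    simpa [p] using (List.mem_filter.1 hz).2
  have haL : a ∈ L := List.mem_of_getLast? ha
  have haD : w.count a < M := by
    simpa [D] using (List.mem_filter.1 (List.mem_of_mem_head? hb)).2
  obtain ⟨c, hca, hmem, hc⟩ : ∃ c, c ≠ a ∧ (∀ z ∈ L, z = a ∨ z = c) ∧ c ∈ L := by
    rcases hmemL a haL with rfl | rfl
    · exact ⟨y, hxy.symm, hmemL, List.mem_filter.2 ⟨hy, by simp [p]⟩⟩
    · exact ⟨x, hxy, fun z hz => (hmemL z hz).symm, List.mem_filter.2 ⟨hx, by simp [p]⟩⟩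
  by_cases hcD : w.count c < M
  · obtain ⟨t, ht⟩ := List.head?_eq_some_iff.1 (hL.head?_dedup_eq hmem hc ha)
    rw [ht, List.filter_cons_of_pos (by simpa [D] using hcD)] at hb
    exact hca (Option.some_inj.1 hb)
  · have := hL.count_le_of_getLast?_eq hmem ha
    rw [hcount c hc, hcount a haL] at this
    omega

theorem represents_appendDeficient {G : SimpleGraph V} {w : List V} (M : ℕ)
    (hw : Represents G w) : Represents G (appendDeficient M w) :=
  ⟨fun v => List.mem_append_left _ (hw.1 v), fun x y hxy =>
    (alternates_appendDeficient_iff hxy (hw.1 x) (hw.1 y)).trans (hw.2 x y hxy)⟩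

theorem count_appendDeficient {M : ℕ} {w : List V} {v : V} (hv : v ∈ w) (hvM : w.count v ≤ M) :
    (appendDeficient M w).count v = min (w.count v + 1) M := by
  rw [appendDeficient, List.count_append]
  by_cases h : w.count v < M
  · rw [List.count_filter (by simpa using h), List.count_dedup, if_pos hv]
    omega
  · have hv' : v ∉ w.dedup.filter fun z => w.count z < M := fun hmem =>
      h (by simpa using (List.mem_filter.1 hmem).2)
    rw [List.count_eq_zero.2 hv']
    omega

theorem count_iterate_appendDeficient {M : ℕ} {w : List V} {v : V} (hv : v ∈ w)
    (hvM : w.count v ≤ M) (k : ℕ) :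
    ((appendDeficient M)^[k] w).count v = min (w.count v + k) M := by
  induction k with
  | zero => simpa
  | succ k ih =>
    have hvk : v ∈ (appendDeficient M)^[k] w :=
      Function.Iterate.rec _ hv (fun _ => List.mem_append_left _) k
    rw [Function.iterate_succ_apply', count_appendDeficient hvk (ih ▸ min_le_right _ _), ih]
    omega

end

theorem exists_uniform_word_general [DecidableEq V] (G : SimpleGraph V)
    (h : WordRepresentable G) :
    ∃ w : List V, Represents G w ∧ Uniform w := by
  obtain ⟨w, hw⟩ := h
  have hcount : ∀ v, ((appendDeficient w.length)^[w.length] w).count v = w.length := fun v => by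
    rw [count_iterate_appendDeficient (hw.1 v) List.count_le_length]
    omega
  exact ⟨(appendDeficient w.length)^[w.length] w,
    Function.Iterate.rec _ hw (fun _ => represents_appendDeficient _) _,
    fun x y _ _ => by rw [hcount, hcount]⟩

/-- If a finite graph is word-representable, then some uniform word represents it. -/
theorem exists_uniform_word [Fintype V] [DecidableEq V] (G : SimpleGraph V)
    (h : WordRepresentable G) :
    ∃ w : List V, Represents G w ∧ Uniform w :=
  exists_uniform_word_general G h

end WordRepr
end

section
/- Let w = w₁w₂ (the concatenation of words w₁ and w₂) be a uniform word representing a finite simple graph G. Then the word w₂w₁ also represents G. -/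
namespace List

variable {α : Type*} [DecidableEq α] {x y : α}

theorem IsChain.count_cons_eq (hxy : x ≠ y) {l : List α} (hc : IsChain (· ≠ ·) (x :: l))
    (hmem : ∀ z ∈ l, z = x ∨ z = y) :
    (x :: l).count x = (x :: l).count y + if l.getLastD x = x then 1 else 0 := by
  induction l generalizing x y with
  | nil => simp [count_cons_of_ne hxy]
  | cons a t ih =>
    obtain ⟨hxa, hc'⟩ := isChain_cons_cons.mp hc
    obtain rfl : a = y := (hmem a mem_cons_self).resolve_left hxa.symm
    have ih := ih hxy.symm hc' fun z hz => (hmem z (mem_cons_of_mem _ hz)).symm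
    have hlast : t.getLastD a = x ∨ t.getLastD a = a := by
      rcases mem_cons.mp (getLastD_mem_cons (l := t) (a := a)) with h | h
      · exact Or.inr h
      · exact hmem _ (mem_cons_of_mem _ h)
    rw [count_cons_self, count_cons_of_ne hxy, getLastD_cons]
    rcases hlast with h | h <;> simp only [h, if_pos, if_neg hxy, if_neg hxy.symm] at ih ⊢ <;> omega

theorem IsChain.head_ne_getLast_of_count_eq (hxy : x ≠ y) {l : List α}
    (hc : IsChain (· ≠ ·) l) (hmem : ∀ z ∈ l, z = x ∨ z = y) (hcount : l.count x = l.count y) :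
    ∀ a ∈ l.head?, ∀ b ∈ l.getLast?, a ≠ b := by
  rcases l with _ | ⟨a, t⟩
  · simp
  rintro _ ⟨⟩ b hb
  rw [getLast?_cons, ← getLastD_eq_getLast?, Option.mem_some_iff] at hb
  subst hb
  have htail : ∀ z ∈ t, z = x ∨ z = y := fun z hz => hmem z (mem_cons_of_mem _ hz)
  rcases hmem a mem_cons_self with rfl | rfl
  · have := hc.count_cons_eq hxy htail
    exact fun h => by rw [if_pos h.symm] at this; omega
  · have := hc.count_cons_eq hxy.symm fun z hz => (htail z hz).symm
    exact fun h => by rw [if_pos h.symm] at this; omega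

theorem IsChain.append_comm_of_count_eq (hxy : x ≠ y) {l₁ l₂ : List α}
    (hc : IsChain (· ≠ ·) (l₁ ++ l₂)) (hmem : ∀ z ∈ l₁ ++ l₂, z = x ∨ z = y)
    (hcount : (l₁ ++ l₂).count x = (l₁ ++ l₂).count y) :
    IsChain (· ≠ ·) (l₂ ++ l₁) := by
  obtain ⟨hc₁, hc₂, -⟩ := isChain_append.mp hc
  refine isChain_append.mpr ⟨hc₂, hc₁, fun b hb a ha => ?_⟩
  exact (hc.head_ne_getLast_of_count_eq hxy hmem hcount a (mem_head?_append_of_mem_head? ha) b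
    (mem_getLast?_append_of_mem_getLast? hb)).symm

end List

namespace WordRepr

variable {V : Type*}

theorem Alternates.append_comm [DecidableEq V] {w₁ w₂ : List V} {x y : V} (hxy : x ≠ y)
    (hcount : (w₁ ++ w₂).count x = (w₁ ++ w₂).count y) (h : Alternates (w₁ ++ w₂) x y) :
    Alternates (w₂ ++ w₁) x y := by
  unfold Alternates at h ⊢
  rw [List.filter_append] at h ⊢
  refine h.append_comm_of_count_eq hxy (fun z hz => ?_) ?_
  · rw [← List.filter_append] at hz
    simpa using List.of_mem_filter hz
  · rw [← List.filter_append, List.count_filter (by simp), List.count_filter (by simp)]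
    exact hcount

theorem alternates_append_comm [DecidableEq V] {w₁ w₂ : List V} {x y : V} (hxy : x ≠ y)
    (hcount : (w₁ ++ w₂).count x = (w₁ ++ w₂).count y) :
    Alternates (w₂ ++ w₁) x y ↔ Alternates (w₁ ++ w₂) x y := by
  have hcount' : (w₂ ++ w₁).count x = (w₂ ++ w₁).count y := by
    simpa only [List.count_append, Nat.add_comm] using hcount
  exact ⟨Alternates.append_comm hxy hcount', Alternates.append_comm hxy hcount⟩

theorem represents_of_cyclic_shift_general [DecidableEq V] (G : SimpleGraph V)
    (w₁ w₂ : List V) (hu : Uniform (w₁ ++ w₂)) (hr : Represents G (w₁ ++ w₂)) :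
    Represents G (w₂ ++ w₁) := by
  refine ⟨fun v => by simpa [or_comm] using hr.1 v, fun x y hxy => ?_⟩
  rw [alternates_append_comm hxy (hu x y (hr.1 x) (hr.1 y))]
  exact hr.2 x y hxy

/-- If the uniform word `w₁ ++ w₂` represents `G`, then so does `w₂ ++ w₁`. -/
theorem represents_of_cyclic_shift [Fintype V] [DecidableEq V] (G : SimpleGraph V)
    (w₁ w₂ : List V) (hu : Uniform (w₁ ++ w₂)) (hr : Represents G (w₁ ++ w₂)) :
    Represents G (w₂ ++ w₁) :=
  represents_of_cyclic_shift_general G w₁ w₂ hu hr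

end WordRepr
end

section
/- Suppose an undirected finite simple graph G has a cycle C = x₁x₂⋯x_m x₁ with m ≥ 4 whose vertex set {x₁,…,x_m} does not induce a clique in G. If G is given a semi-transitive orientation in which m−2 of the edges of C are oriented in the same direction around the cycle (i.e., each of these edges is oriented from x_i to x_{i+1}, indices taken modulo m), then the remaining two edges of C are both oriented in the opposite direction (from x_{i+1} to x_i). -/
/-!
If the edge `x i → x (i + 1)` with `i ∉ S` were oriented forwards, at most one edge of the cycle,
say the one at `j`, would fail to be. Walking once around the cycle from `x (j + 1)` to `x j` is
then a directed path whose endpoints are adjacent, so semi-transitivity orients, hence makes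
adjacent, every pair of cycle vertices: the cycle would induce a clique.
-/

namespace WordRepr

variable {V : Type*}

theorem Finset.exists_eq_of_notMem_of_ne {α : Type*} [Fintype α] [DecidableEq α]
    {S : Finset α} (hS : Fintype.card α ≤ S.card + 2) {i : α} (hi : i ∉ S) :
    ∃ j, ∀ k ∉ S, k ≠ i → k = j := by
  have : Nonempty α := ⟨i⟩
  have hcard : (Sᶜ.erase i).card ≤ 1 := by
    rw [Finset.card_erase_of_mem (Finset.mem_compl.mpr hi), Finset.card_compl]
    omega
  obtain ⟨j, hj⟩ := Finset.card_le_one_iff_subset_singleton.mp hcard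
  exact ⟨j, fun k hk hki => Finset.mem_singleton.mp (hj (by simp [hk, hki]))⟩

section Cycle

variable {G : SimpleGraph V} {o : V → V → Prop}

theorem SemiTransitive.pairwise_adj_of_path (hst : SemiTransitive G o) {k : ℕ}
    {p : Fin (k + 1) → V} (hpath : ∀ i : Fin k, o (p i.castSucc) (p i.succ))
    (hends : G.Adj (p 0) (p (Fin.last k))) :
    Pairwise fun a b => G.Adj (p a) (p b) := by
  have hlt {a b : Fin (k + 1)} (hab : a < b) : G.Adj (p a) (p b) :=
    hst.1.1 _ _ (hst.2.2 k p hpath hends a b hab)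
  intro a b hab
  rcases hab.lt_or_gt with hab | hba
  · exact hlt hab
  · exact (hlt hba).symm

theorem SemiTransitive.pairwise_adj_of_forward_except (hst : SemiTransitive G o) {m : ℕ}
    [NeZero m] {x : Fin m → V} {j : Fin m} (hadj : G.Adj (x j) (x (j + 1)))
    (hfwd : ∀ k, k ≠ j → o (x k) (x (k + 1))) :
    Pairwise fun u v => G.Adj (x u) (x v) := by
  obtain ⟨n, rfl⟩ : ∃ n, m = n + 1 := ⟨m - 1, by have := NeZero.pos m; omega⟩
  have hpath : ∀ t : Fin n, o (x (j + 1 + t.castSucc)) (x (j + 1 + t.succ)) := by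
    intro t
    have hne : j + 1 + t.castSucc ≠ j := by
      rw [add_assoc, add_comm 1, Fin.coeSucc_eq_succ, Ne, add_eq_left]
      exact Fin.succ_ne_zero t
    simpa [← Fin.coeSucc_eq_succ, add_assoc] using hfwd _ hne
  have hends : G.Adj (x (j + 1 + 0)) (x (j + 1 + Fin.last n)) := by
    rw [add_zero, add_assoc, add_comm 1, Fin.last_add_one, add_zero]
    exact hadj.symm
  have hcl := hst.pairwise_adj_of_path (p := fun t => x (j + 1 + t)) hpath hends
  intro u v huv
  simpa using @hcl (u - (j + 1)) (v - (j + 1)) (by simpa using huv)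

end Cycle

theorem cycle_two_edges_reversed_general (G : SimpleGraph V) (o : V → V → Prop)
    (hst : SemiTransitive G o)
    (m : ℕ) [NeZero m] (x : Fin m → V)
    (hcyc : ∀ i : Fin m, G.Adj (x i) (x (i + 1)))
    (hnc : ¬ ∀ i j : Fin m, i ≠ j → G.Adj (x i) (x j))
    (S : Finset (Fin m)) (hS : S.card = m - 2)
    (hfor : ∀ i ∈ S, o (x i) (x (i + 1))) :
    ∀ i ∉ S, o (x (i + 1)) (x i) := by
  intro i hi
  by_contra hback
  have hi_fwd : o (x i) (x (i + 1)) := (hst.1.2 _ _ (hcyc i)).mpr hback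
  obtain ⟨j, hj⟩ := Finset.exists_eq_of_notMem_of_ne (by rw [Fintype.card_fin]; omega) hi
  refine hnc fun u v huv => hst.pairwise_adj_of_forward_except (hcyc j) (fun k hkj => ?_) huv
  by_cases hkS : k ∈ S
  · exact hfor k hkS
  · by_cases hki : k = i
    · exact hki ▸ hi_fwd
    · exact absurd (hj k hkS hki) hkj

/-- If `m - 2` edges of a non-clique cycle of length `m ≥ 4` are oriented forwards in a
semi-transitive orientation, then the remaining two edges are oriented backwards. -/
theorem cycle_two_edges_reversed [Fintype V] (G : SimpleGraph V) (o : V → V → Prop)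
    (hst : SemiTransitive G o)
    (m : ℕ) [NeZero m] (hm : 4 ≤ m) (x : Fin m → V) (hinj : Function.Injective x)
    (hcyc : ∀ i : Fin m, G.Adj (x i) (x (i + 1)))
    (hnc : ¬ ∀ i j : Fin m, i ≠ j → G.Adj (x i) (x j))
    (S : Finset (Fin m)) (hS : S.card = m - 2)
    (hfor : ∀ i ∈ S, o (x i) (x (i + 1))) :
    ∀ i ∉ S, o (x (i + 1)) (x i) :=
  cycle_two_edges_reversed_general G o hst m x hcyc hnc S hS hfor

end WordRepr
end

section
/- Suppose an undirected finite simple graph G has a cycle C = x₁x₂⋯x_m x₁ with m ≥ 4 whose vertex set does not induce a clique in G. If G is given a semi-transitive orientation in which m−2 of the edges of C are oriented in the forward direction around the cycle (from x_i to x_{i+1}, indices modulo m) and one of the two remaining edges is oriented in the backward direction (from x_{i+1} to x_i), then the last remaining edge of C is also oriented in the backward direction. -/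
/-! If the last edge were oriented forwards too, all edges of `C` but one would be, so `C` minus
that edge is a directed path whose endpoints are adjacent. Semi-transitivity then orients, and
hence joins, every pair of its vertices, so `C` would induce a clique. -/

namespace WordRepr

variable {V : Type*}

theorem Finset.mem_or_eq_or_eq_of_card_add_two_ge {α : Type*} [Fintype α] [DecidableEq α]
    {S : Finset α} (hS : Fintype.card α ≤ S.card + 2) {i j : α} (hi : i ∉ S) (hj : j ∉ S)
    (hij : i ≠ j) (e : α) : e ∈ S ∨ e = i ∨ e = j := by
  by_contra! he
  have hcard : (insert e (insert i (insert j S))).card = S.card + 3 := by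
    rw [Finset.card_insert_of_notMem (by simp [he.1, he.2.1, he.2.2]),
      Finset.card_insert_of_notMem (by simp [hi, hij]), Finset.card_insert_of_notMem hj]
  have := Finset.card_le_univ (insert e (insert i (insert j S)))
  omega

namespace SemiTransitive

variable {G : SimpleGraph V} {o : V → V → Prop}

open Fin.NatCast

theorem adj_of_path (hst : SemiTransitive G o) {k : ℕ} {p : Fin (k + 1) → V}
    (hpath : ∀ i : Fin k, o (p i.castSucc) (p i.succ)) (hends : G.Adj (p 0) (p (Fin.last k)))
    {a b : Fin (k + 1)} (hab : a ≠ b) : G.Adj (p a) (p b) := by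
  rcases hab.lt_or_gt with h | h
  · exact hst.1.1 _ _ (hst.2.2 k p hpath hends a b h)
  · exact (hst.1.1 _ _ (hst.2.2 k p hpath hends b a h)).symm

theorem adj_of_cycle_of_forward (hst : SemiTransitive G o) {m : ℕ} [NeZero m] {x : Fin m → V}
    {j : Fin m} (hj : G.Adj (x j) (x (j + 1))) (hfor : ∀ e, e ≠ j → o (x e) (x (e + 1)))
    {u v : Fin m} (huv : u ≠ v) : G.Adj (x u) (x v) := by
  have hm : m - 1 + 1 = m := Nat.sub_add_cancel NeZero.one_le
  let p : Fin (m - 1 + 1) → V := fun a => x (j + 1 + ((a : ℕ) : Fin m))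
  have hpath : ∀ a : Fin (m - 1), o (p a.castSucc) (p a.succ) := by
    intro a
    have hne : j + 1 + ((a : ℕ) : Fin m) ≠ j := by
      rw [add_assoc, add_ne_left, ← Nat.cast_one, ← Nat.cast_add, add_comm, Ne,
        Fin.natCast_eq_zero]
      exact Nat.not_dvd_of_pos_of_lt (Nat.succ_pos _) (by omega)
    simpa [p, add_assoc] using hfor _ hne
  have hends : G.Adj (p 0) (p (Fin.last (m - 1))) := by
    have hlast : j + 1 + ((m - 1 : ℕ) : Fin m) = j := by
      rw [add_assoc, ← Nat.cast_one, ← Nat.cast_add, add_comm 1, hm, Fin.natCast_self, add_zero]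
    simpa [p, hlast] using hj.symm
  have hp_sub : ∀ w : Fin m, p ⟨(w - (j + 1) : Fin m), by omega⟩ = x w := by
    intro w
    simp [p]
  rw [← hp_sub u, ← hp_sub v]
  refine hst.adj_of_path hpath hends fun h => huv ?_
  exact sub_left_inj.mp (Fin.ext (by simpa using congrArg Fin.val h))

end SemiTransitive

theorem cycle_last_edge_reversed_general (G : SimpleGraph V) (o : V → V → Prop)
    (hst : SemiTransitive G o)
    (m : ℕ) [NeZero m] (x : Fin m → V)
    (hcyc : ∀ i : Fin m, G.Adj (x i) (x (i + 1)))
    (hnc : ¬ ∀ i j : Fin m, i ≠ j → G.Adj (x i) (x j))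
    (S : Finset (Fin m)) (hS : S.card = m - 2)
    (hfor : ∀ i ∈ S, o (x i) (x (i + 1)))
    (j : Fin m) (hj : j ∉ S) :
    ∀ i : Fin m, i ∉ S → i ≠ j → o (x (i + 1)) (x i) := by
  intro i hiS hij
  by_contra hni
  have hi : o (x i) (x (i + 1)) := (hst.1.2 _ _ (hcyc i)).mpr hni
  have hforward : ∀ e, e ≠ j → o (x e) (x (e + 1)) := by
    intro e hej
    rcases Finset.mem_or_eq_or_eq_of_card_add_two_ge (by rw [Fintype.card_fin, hS]; omega) hiS hj hij e
      with heS | rfl | rfl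
    · exact hfor e heS
    · exact hi
    · exact (hej rfl).elim
  exact hnc fun u v huv => hst.adj_of_cycle_of_forward (hcyc j) hforward huv

/-- If `m - 2` edges of a non-clique cycle of length `m ≥ 4` are oriented forwards in a
semi-transitive orientation and one of the two remaining edges is oriented backwards,
then the last remaining edge is also oriented backwards. -/
theorem cycle_last_edge_reversed [Fintype V] (G : SimpleGraph V) (o : V → V → Prop)
    (hst : SemiTransitive G o)
    (m : ℕ) [NeZero m] (hm : 4 ≤ m) (x : Fin m → V) (hinj : Function.Injective x)
    (hcyc : ∀ i : Fin m, G.Adj (x i) (x (i + 1)))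
    (hnc : ¬ ∀ i j : Fin m, i ≠ j → G.Adj (x i) (x j))
    (S : Finset (Fin m)) (hS : S.card = m - 2)
    (hfor : ∀ i ∈ S, o (x i) (x (i + 1)))
    (j : Fin m) (hj : j ∉ S) (hback : o (x (j + 1)) (x j)) :
    ∀ i : Fin m, i ∉ S → i ≠ j → o (x (i + 1)) (x i) :=
  cycle_last_edge_reversed_general G o hst m x hcyc hnc S hS hfor j hj

end WordRepr
end

section
/- Suppose a finite simple graph G is word-representable and v is a vertex of G. Then there exists a semi-transitive orientation of G in which v is a source, i.e., every edge incident with v is oriented away from v. -/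
/-!
Order the edges of `G` by first occurrences in a representing word `w`. Along a directed path
the number of occurrences of the current vertex in each prefix of `w` can only drop, and if the
ends of the path are adjacent it drops by at most one in total; hence any two vertices of the
path alternate in `w`, and this orientation is semi-transitive.

To make `v` a source, let `S` be the set of vertices reachable from `v` and reverse every edge
between `S` and its complement; all of them entered `S`, so afterwards all leave it. A directed
path now runs through `S` first and then through its complement, and rotating it at that cut
gives a directed path of the original orientation; its shortcuts yield the required ones.
-/

namespace WordRepr

variable {V : Type*}

section Orientation

variable {G : SimpleGraph V} {o : V → V → Prop} {S : Set V} {x y : V}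

theorem semiTransitive_iff_pairwise :
    SemiTransitive G o ↔ IsOrientationOf G o ∧ Acyclic o ∧
      ∀ l : List V, l.IsChain o → (∀ a ∈ l.head?, ∀ b ∈ l.getLast?, G.Adj a b) →
        l.Pairwise o := by
  refine and_congr_right fun _ => and_congr_right fun _ =>
    ⟨fun h l hl hadj => ?_, fun h k p hp hadj => ?_⟩
  · obtain _ | ⟨a, t⟩ := l
    · exact List.Pairwise.nil
    · rw [← List.ofFn_get (a :: t)] at hl ⊢
      refine List.pairwise_ofFn.2 (h t.length _ (fun i => ?_)
        (hadj _ (by simp) _ (by simp [List.getLast?_eq_getElem?])))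
      exact List.isChain_ofFn.1 hl i (by simp)
  · have hends : ∀ a ∈ (List.ofFn p).head?, ∀ b ∈ (List.ofFn p).getLast?, G.Adj a b := by
      rw [List.head?_eq_some_head (by simp), List.getLast?_eq_some_getLast (by simp),
        List.head_ofFn, List.getLast_ofFn]
      rintro _ ⟨⟩ _ ⟨⟩
      exact hadj
    exact List.pairwise_ofFn.1 (h _ (List.isChain_ofFn.2 fun i hi => hp ⟨i, by omega⟩) hends)

theorem acyclic_of_lt {α : Type*} [Preorder α] (f : V → α)
    (h : ∀ x y, o x y → f x < f y) : Acyclic o := fun v hv => by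
  have := hv.lift f h
  rw [Relation.transGen_eq_self] at this
  exact lt_irrefl _ this

def reverseCut (o : V → V → Prop) (S : Set V) (x y : V) : Prop :=
  (x ∈ S ↔ y ∈ S) ∧ o x y ∨ ¬(x ∈ S ↔ y ∈ S) ∧ o y x

theorem reverseCut_iff_of_iff (h : x ∈ S ↔ y ∈ S) : reverseCut o S x y ↔ o x y := by
  simp [reverseCut, h]

theorem reverseCut_iff_of_not_iff (h : ¬(x ∈ S ↔ y ∈ S)) : reverseCut o S x y ↔ o y x := by
  simp only [reverseCut, h, false_and, false_or, not_false_eq_true, true_and]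

theorem IsOrientationOf.reverseCut (ho : IsOrientationOf G o) :
    IsOrientationOf G (reverseCut o S) := by
  refine ⟨fun x y h => ?_, fun x y h => ?_⟩
  · rcases h with ⟨-, h⟩ | ⟨-, h⟩
    exacts [ho.1 x y h, (ho.1 y x h).symm]
  · by_cases hxy : x ∈ S ↔ y ∈ S
    · rw [reverseCut_iff_of_iff hxy, reverseCut_iff_of_iff hxy.symm]
      exact ho.2 x y h
    · rw [reverseCut_iff_of_not_iff hxy, reverseCut_iff_of_not_iff (mt Iff.symm hxy)]
      exact ho.2 y x h.symm

theorem exists_eq_append_of_isChain {R : V → V → Prop} (hR : ∀ ⦃x y⦄, R x y → y ∈ S → x ∈ S)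
    {l : List V} (hl : l.IsChain R) :
    ∃ l₁ l₂, l = l₁ ++ l₂ ∧ (∀ x ∈ l₁, x ∈ S) ∧ ∀ x ∈ l₂, x ∉ S := by
  induction l with
  | nil => exact ⟨[], [], rfl, by simp, by simp⟩
  | cons a t ih =>
    obtain ⟨l₁, l₂, rfl, h₁, h₂⟩ := ih hl.tail
    by_cases ha : a ∈ S
    · exact ⟨a :: l₁, l₂, rfl, by simpa [ha] using h₁, h₂⟩
    · obtain rfl : l₁ = [] := by
        obtain _ | ⟨b, l₁⟩ := l₁
        · rfl
        · exact absurd (hR (List.isChain_cons_cons.1 hl).1 (h₁ b (by simp))) ha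
      exact ⟨[], a :: l₂, rfl, by simp, by simpa [ha] using h₂⟩

section Closed

variable (hS : ∀ ⦃x y⦄, o x y → x ∈ S → y ∈ S)
include hS

theorem IsOrientationOf.rel_swap_of_adj (ho : IsOrientationOf G o) (hadj : G.Adj x y)
    (hx : x ∈ S) (hy : y ∉ S) : o y x :=
  not_not.1 fun h => hy (hS ((ho.2 x y hadj).2 h) hx)

theorem mem_of_reverseCut (h : reverseCut o S x y) (hy : y ∈ S) : x ∈ S := by
  rcases h with ⟨hxy, -⟩ | ⟨-, h⟩
  exacts [hxy.2 hy, hS h hy]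

theorem Acyclic.reverseCut (hac : Acyclic o) : Acyclic (reverseCut o S) := by
  -- a directed path either stays on one side of the cut, where nothing is reversed,
  -- or leaves `S` for good
  have key : ∀ {a b}, Relation.TransGen (WordRepr.reverseCut o S) a b →
      a ∈ S ∧ b ∉ S ∨ (a ∈ S ↔ b ∈ S) ∧ Relation.TransGen o a b := by
    intro a b hab
    induction hab with
    | single h =>
      rcases h with ⟨hab, h⟩ | ⟨hab, h⟩
      · exact Or.inr ⟨hab, .single h⟩
      · have := hS h
        tauto
    | tail _ hbc ih =>
      have hcb := mem_of_reverseCut hS hbc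
      rcases hbc with ⟨hbc, h⟩ | ⟨hbc, -⟩
      · rcases ih with ⟨ha, hb⟩ | ⟨hab, ih⟩
        · exact Or.inl ⟨ha, fun hc => hb (hbc.2 hc)⟩
        · exact Or.inr ⟨hab.trans hbc, ih.tail h⟩
      · rcases ih with ⟨ha, hb⟩ | ⟨hab, -⟩ <;> tauto
  intro a ha
  rcases key ha with ⟨h, h'⟩ | ⟨-, h⟩
  exacts [h' h, hac a h]

theorem pairwise_reverseCut (h : SemiTransitive G o) {l : List V}
    (hl : l.IsChain (reverseCut o S)) (hadj : ∀ a ∈ l.head?, ∀ b ∈ l.getLast?, G.Adj a b) :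
    l.Pairwise (reverseCut o S) := by
  obtain ⟨l₁, l₂, rfl, h₁, h₂⟩ := exists_eq_append_of_isChain (fun _ _ => mem_of_reverseCut hS) hl
  have hin : ∀ x ∈ l₁, ∀ y ∈ l₁, reverseCut o S x y ↔ o x y := fun x hx y hy =>
    reverseCut_iff_of_iff (iff_of_true (h₁ x hx) (h₁ y hy))
  have hout : ∀ x ∈ l₂, ∀ y ∈ l₂, reverseCut o S x y ↔ o x y := fun x hx y hy =>
    reverseCut_iff_of_iff (iff_of_false (h₂ x hx) (h₂ y hy))
  have hcross : ∀ x ∈ l₁, ∀ y ∈ l₂, reverseCut o S x y ↔ o y x := fun x hx y hy =>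
    reverseCut_iff_of_not_iff fun h => h₂ y hy (h.1 (h₁ x hx))
  obtain ⟨hc₁, hc₂, hjoin⟩ := List.isChain_append.1 hl
  replace hc₁ : l₁.IsChain o := (List.IsChain.iff_mem.1 hc₁).imp fun x y ⟨hx, hy, h⟩ =>
    (hin x hx y hy).1 h
  replace hc₂ : l₂.IsChain o := (List.IsChain.iff_mem.1 hc₂).imp fun x y ⟨hx, hy, h⟩ =>
    (hout x hx y hy).1 h
  -- rotating the path at the cut gives a directed path of `o`
  have hrot : (l₂ ++ l₁).Pairwise o := by
    refine (semiTransitive_iff_pairwise.1 h).2.2 _ (List.isChain_append.2 ⟨hc₂, hc₁, ?_⟩) ?_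
    · intro y hy x hx
      have hy₂ := List.mem_of_mem_getLast? hy
      have hx₁ := List.mem_of_mem_head? hx
      refine h.1.rel_swap_of_adj hS (hadj x ?_ y ?_) (h₁ x hx₁) (h₂ y hy₂)
      · rw [List.head?_append_of_ne_nil _ (List.ne_nil_of_mem hx₁)]; exact hx
      · rw [List.getLast?_append_of_ne_nil _ (List.ne_nil_of_mem hy₂)]; exact hy
    · by_cases e₁ : l₁ = []
      · simpa [e₁] using hadj
      by_cases e₂ : l₂ = []
      · simpa [e₂] using hadj
      intro a ha b hb
      rw [List.head?_append_of_ne_nil _ e₂] at ha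
      rw [List.getLast?_append_of_ne_nil _ e₁] at hb
      exact (h.1.reverseCut.1 b a (hjoin b hb a ha)).symm
  obtain ⟨hp₂, hp₁, hp⟩ := List.pairwise_append.1 hrot
  refine List.pairwise_append.2 ⟨hp₁.imp_of_mem fun hx hy h => (hin _ hx _ hy).2 h,
    hp₂.imp_of_mem fun hx hy h => (hout _ hx _ hy).2 h, fun x hx y hy => ?_⟩
  exact (hcross x hx y hy).2 (hp y hy x hx)

theorem SemiTransitive.reverseCut (h : SemiTransitive G o) :
    SemiTransitive G (reverseCut o S) :=
  semiTransitive_iff_pairwise.2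
    ⟨h.1.reverseCut, h.2.1.reverseCut hS, fun _ => pairwise_reverseCut hS h⟩

end Closed

theorem SemiTransitive.exists_source (h : SemiTransitive G o) (v : V) :
    ∃ o' : V → V → Prop, SemiTransitive G o' ∧ ∀ u : V, G.Adj v u → o' v u := by
  set S := {u | Relation.ReflTransGen o v u}
  have hS : ∀ ⦃x y⦄, o x y → x ∈ S → y ∈ S := fun _ _ hxy hx => Relation.ReflTransGen.tail hx hxy
  have hv : v ∈ S := Relation.ReflTransGen.refl
  refine ⟨WordRepr.reverseCut o S, h.reverseCut hS, fun u hu => ?_⟩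
  by_cases hu' : u ∈ S
  · refine (reverseCut_iff_of_iff (iff_of_true hv hu')).2 ((h.1.2 v u hu).2 fun huv => ?_)
    exact h.2.1 u ((Relation.TransGen.single huv).trans_left hu')
  · exact (reverseCut_iff_of_not_iff fun h => hu' (h.1 hv)).2 (h.1.rel_swap_of_adj hS hu hv hu')

end Orientation

section Word

variable [DecidableEq V] {G : SimpleGraph V} {w : List V} {x y : V}

-- `x` and `y` alternate in `w` starting with `x` (`countLeads_iff_isChain`), in a form that
-- composes along directed paths
def CountLeads (w : List V) (x y : V) : Prop :=
  ∀ n, (w.take n).count y ≤ (w.take n).count x ∧ (w.take n).count x ≤ (w.take n).count y + 1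

theorem countLeads_cons_iff {a : V} :
    CountLeads (a :: w) x y ↔ ∀ n, (w.take n).count y + (if a = y then 1 else 0) ≤
      (w.take n).count x + (if a = x then 1 else 0) ∧
      (w.take n).count x + (if a = x then 1 else 0) ≤
        (w.take n).count y + (if a = y then 1 else 0) + 1 := by
  refine ⟨fun h n => ?_, fun h n => ?_⟩
  · simpa [List.count_cons] using h (n + 1)
  · cases n with
    | zero => simp
    | succ n => simpa [List.count_cons] using h n

theorem countLeads_iff_isChain (hxy : x ≠ y) :
    CountLeads w x y ↔ (y :: w.filter fun z => decide (z = x ∨ z = y)).IsChain (· ≠ ·) := by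
  induction w generalizing x y with
  | nil => simp [CountLeads]
  | cons a w ih =>
    rw [countLeads_cons_iff]
    by_cases hax : a = x
    · subst hax
      have hswap : (w.filter fun z => decide (z = a ∨ z = y)) =
          w.filter fun z => decide (z = y ∨ z = a) := by simp only [or_comm]
      rw [List.filter_cons_of_pos (by simp), List.isChain_cons_cons, hswap, ← ih hxy.symm]
      simp only [if_true, if_neg hxy, CountLeads]
      exact ⟨fun h => ⟨hxy.symm, fun n => by have := h n; omega⟩,
        fun h n => by have := h.2 n; omega⟩
    by_cases hay : a = y
    · subst hay
      refine iff_of_false (fun h => ?_) ?_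
      · simpa [hax] using (h 0).1
      · rw [List.filter_cons_of_pos (by simp), List.isChain_cons_cons]
        exact fun h => h.1 rfl
    · rw [List.filter_cons_of_neg (by simp [hax, hay]), ← ih hxy]
      simp [hax, hay, CountLeads]

theorem exists_filter_eq_cons (hx : x ∈ w) (hlt : w.idxOf x < w.idxOf y) :
    ∃ t, w.filter (fun z => decide (z = x ∨ z = y)) = x :: t := by
  induction w with
  | nil => simp at hx
  | cons a w ih =>
    by_cases hax : a = x
    · subst hax
      exact ⟨_, List.filter_cons_of_pos (by simp)⟩
    by_cases hay : a = y
    · subst hay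
      simp at hlt
    rw [List.idxOf_cons_ne _ hax, List.idxOf_cons_ne _ hay] at hlt
    rw [List.filter_cons_of_neg (by simp [hax, hay])]
    exact ih ((List.mem_cons.1 hx).resolve_left (Ne.symm hax)) (Nat.succ_lt_succ_iff.1 hlt)

theorem Alternates.countLeads (h : Alternates w x y) (hx : x ∈ w)
    (hlt : w.idxOf x < w.idxOf y) : CountLeads w x y := by
  have hxy : x ≠ y := fun e => hlt.ne (by rw [e])
  obtain ⟨t, ht⟩ := exists_filter_eq_cons hx hlt
  rw [Alternates, ht] at h
  rw [countLeads_iff_isChain hxy, ht, List.isChain_cons_cons]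
  exact ⟨hxy.symm, h⟩

theorem CountLeads.alternates (h : CountLeads w x y) (hxy : x ≠ y) : Alternates w x y :=
  ((countLeads_iff_isChain hxy).1 h).tail

def wordOrientation (G : SimpleGraph V) (w : List V) (x y : V) : Prop :=
  G.Adj x y ∧ w.idxOf x < w.idxOf y

theorem Represents.countLeads (hw : Represents G w) (h : wordOrientation G w x y) :
    CountLeads w x y :=
  ((hw.2 x y h.1.ne).2 h.1).countLeads (hw.1 x) h.2

theorem Represents.semiTransitive (hw : Represents G w) :
    SemiTransitive G (wordOrientation G w) := by
  refine ⟨⟨fun x y h => h.1, fun x y h => ?_⟩, acyclic_of_lt w.idxOf fun x y h => h.2,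
    fun k p hp hadj i j hij => ?_⟩
  · have hne : w.idxOf x ≠ w.idxOf y := mt (List.idxOf_inj (hw.1 x)).1 h.ne
    simp only [wordOrientation, h, h.symm, true_and, not_lt]
    omega
  have hidx : StrictMono fun i => w.idxOf (p i) := Fin.strictMono_iff_lt_succ.2 fun i => (hp i).2
  -- prefix counts decrease along the path, and the edge between its ends caps the drop at one
  have hcount : Antitone fun i n => (w.take n).count (p i) :=
    Fin.antitone_iff_succ_le.2 fun i n => (hw.countLeads (hp i) n).1
  have hends : CountLeads w (p 0) (p (Fin.last k)) :=
    hw.countLeads ⟨hadj, hidx ((Fin.zero_le i).trans_lt (hij.trans_le (Fin.le_last j)))⟩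
  have hne : p i ≠ p j := fun e => (hidx hij).ne (by simp only [e])
  have hlead : CountLeads w (p i) (p j) := fun n =>
    ⟨hcount hij.le n, (hcount (Fin.zero_le i) n).trans <|
      (hends n).2.trans (Nat.add_le_add_right (hcount (Fin.le_last j) n) 1)⟩
  exact ⟨(hw.2 _ _ hne).1 (hlead.alternates hne), hidx hij⟩

end Word

theorem exists_semiTransitive_source_general [DecidableEq V] (G : SimpleGraph V)
    (h : WordRepresentable G) (v : V) :
    ∃ o : V → V → Prop, SemiTransitive G o ∧ ∀ u : V, G.Adj v u → o v u := by
  obtain ⟨w, hw⟩ := h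
  exact hw.semiTransitive.exists_source v

/-- Every word-representable graph has a semi-transitive orientation in which any
prescribed vertex `v` is a source. -/
theorem exists_semiTransitive_source [Fintype V] [DecidableEq V] (G : SimpleGraph V)
    (h : WordRepresentable G) (v : V) :
    ∃ o : V → V → Prop, SemiTransitive G o ∧ ∀ u : V, G.Adj v u → o v u :=
  exists_semiTransitive_source_general G h v

end WordRepr
end

section
/- Suppose a finite simple graph G is word-representable and v is a vertex of G. Then there exists a semi-transitive orientation of G in which v is a sink, i.e., every edge incident with v is oriented towards v. -/
/-!
Orient every edge from the vertex whose first occurrence in the representing word comes first.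
If `x → y`, alternation forces `#y ≤ #x ≤ #y + 1` in every prefix of the word. Along a directed
path `p₀ → ⋯ → pₖ` these counts decrease, so when `p₀pₖ` is an edge,
`#pⱼ ≤ #pᵢ ≤ #p₀ ≤ #pₖ + 1 ≤ #pⱼ + 1` for `i < j`: the letters `pᵢ` and `pⱼ` alternate, and the
orientation is semi-transitive.

Reversing the edges at a source `s` preserves semi-transitivity, since a path ending at the new
sink `s`, rotated to start at `s`, is a path of the old orientation. Reversing at a minimal
ancestor of `v` removes it from the ancestors of `v` and creates no new ones, so after finitely
many reversals `v` is a source, and one more reversal makes it a sink.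
-/

namespace WordRepr

variable {V : Type*}

/-- The last conjunct of `SemiTransitive`. -/
def ShortcutFree (G : SimpleGraph V) (o : V → V → Prop) : Prop :=
  ∀ (k : ℕ) (p : Fin (k + 1) → V),
    (∀ i : Fin k, o (p i.castSucc) (p i.succ)) →
    G.Adj (p 0) (p (Fin.last k)) →
    ∀ i j : Fin (k + 1), i < j → o (p i) (p j)

theorem acyclic_of_rank {o : V → V → Prop} (f : V → ℕ) (hf : ∀ x y, o x y → f x < f y) :
    Acyclic o := by
  intro v hv
  have := hv.lift f hf
  rw [Relation.transGen_eq_self] at this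
  exact lt_irrefl _ this

theorem Acyclic.wellFounded_transGen [Finite V] {o : V → V → Prop} (h : Acyclic o) :
    WellFounded (Relation.TransGen o) :=
  haveI : IsTrans V (Relation.TransGen o) := ⟨fun _ _ _ => Relation.TransGen.trans⟩
  haveI : Std.Irrefl (Relation.TransGen o) := ⟨h⟩
  Finite.wellFounded_of_trans_of_irrefl _

section Leads

variable [DecidableEq V]

def Leads (w : List V) (x y : V) : Prop :=
  ∀ u, u <+: w → u.count y ≤ u.count x ∧ u.count x ≤ u.count y + 1

theorem leads_nil (x y : V) : Leads [] x y := by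
  intro u hu
  simp [List.prefix_nil.1 hu]

theorem leads_cons_self_iff {w : List V} {x y : V} (hxy : x ≠ y) :
    Leads (x :: w) x y ↔ Leads w y x := by
  have hcount : ∀ u : List V, (x :: u).count x = u.count x + 1 ∧ (x :: u).count y = u.count y :=
    fun u => by simp [hxy]
  constructor
  · intro h u hu
    have := h (x :: u) (List.prefix_cons_iff.2 (Or.inr ⟨u, rfl, hu⟩))
    rw [(hcount u).1, (hcount u).2] at this
    omega
  · intro h _ hu
    rcases List.prefix_cons_iff.1 hu with rfl | ⟨u, rfl, hu'⟩
    · simp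
    · have := h u hu'
      rw [(hcount u).1, (hcount u).2]
      omega

theorem not_leads_cons {w : List V} {x y : V} (hxy : x ≠ y) : ¬ Leads (y :: w) x y := by
  intro h
  have := (h [y] (by simp)).1
  simp [hxy.symm] at this

theorem isChain_cons_iff_leads {t : List V} {x y : V} (hxy : x ≠ y)
    (ht : ∀ z ∈ t, z = x ∨ z = y) (hchain : t.IsChain (· ≠ ·) ↔ Leads t x y ∨ Leads t y x) :
    (x :: t).IsChain (· ≠ ·) ↔ Leads t y x := by
  rw [List.isChain_cons, hchain]
  cases t with
  | nil => simp [leads_nil]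
  | cons b t =>
    rcases ht b List.mem_cons_self with rfl | rfl
    · simp [not_leads_cons hxy.symm]
    · simp [not_leads_cons hxy, hxy]

theorem isChain_ne_iff_leads {x y : V} (hxy : x ≠ y) {P : List V} (hP : ∀ z ∈ P, z = x ∨ z = y) :
    P.IsChain (· ≠ ·) ↔ Leads P x y ∨ Leads P y x := by
  induction P with
  | nil => simp [leads_nil]
  | cons a t ih =>
    have ht : ∀ z ∈ t, z = x ∨ z = y := fun z hz => hP z (List.mem_cons_of_mem a hz)
    rcases hP a List.mem_cons_self with rfl | rfl
    · rw [isChain_cons_iff_leads hxy ht (ih ht), leads_cons_self_iff hxy]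
      simp [not_leads_cons hxy.symm]
    · rw [isChain_cons_iff_leads hxy.symm (fun z hz => (ht z hz).symm) ((ih ht).trans or_comm),
        leads_cons_self_iff hxy.symm]
      simp [not_leads_cons hxy]

theorem leads_filter_iff {w : List V} {x y : V} {p : V → Bool} (hx : p x) (hy : p y) :
    Leads (w.filter p) x y ↔ Leads w x y := by
  simp only [Leads, List.prefix_filter_iff, forall_exists_index, and_imp]
  constructor
  · intro h u hu
    simpa only [List.count_filter hx, List.count_filter hy] using h _ u hu rfl
  · rintro h _ u hu rfl
    simpa only [List.count_filter hx, List.count_filter hy] using h u hu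

theorem alternates_iff_leads {w : List V} {x y : V} (hxy : x ≠ y) :
    Alternates w x y ↔ Leads w x y ∨ Leads w y x := by
  have hmem : ∀ z ∈ w.filter (fun z => decide (z = x ∨ z = y)), z = x ∨ z = y :=
    fun z hz => by simpa using (List.mem_filter.1 hz).2
  rw [Alternates, List.Chain', isChain_ne_iff_leads hxy hmem,
    leads_filter_iff (by simp) (by simp), leads_filter_iff (by simp) (by simp)]

theorem Leads.idxOf_le {w : List V} {x y : V} (h : Leads w x y) (hy : y ∈ w) :
    w.idxOf x ≤ w.idxOf y := by
  set u := w.take (w.idxOf y + 1)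
  have hyu : y ∈ u := (List.mem_take_iff_idxOf_lt hy).2 (Nat.lt_succ_self _)
  have hxu : x ∈ u := List.count_pos_iff.1 <|
    (List.count_pos_iff.2 hyu).trans_le (h u (List.take_prefix _ _)).1
  exact Nat.lt_succ_iff.1 <| (List.mem_take_iff_idxOf_lt (List.mem_of_mem_take hxu)).1 hxu

theorem Represents.leads_of_adj {G : SimpleGraph V} {w : List V} (hw : Represents G w) {x y : V}
    (hxy : G.Adj x y) (hlt : w.idxOf x < w.idxOf y) : Leads w x y :=
  ((alternates_iff_leads hxy.ne).1 ((hw.2 x y hxy.ne).2 hxy)).resolve_right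
    fun h => (h.idxOf_le (hw.1 x)).not_gt hlt

theorem Represents.semiTransitive_s6 {G : SimpleGraph V} {w : List V} (hw : Represents G w) :
    SemiTransitive G (fun x y => G.Adj x y ∧ w.idxOf x < w.idxOf y) := by
  refine ⟨⟨fun x y h => h.1, fun x y hxy => ?_⟩, acyclic_of_rank (w.idxOf ·) fun x y h => h.2, ?_⟩
  · have hne : w.idxOf x ≠ w.idxOf y := fun h => hxy.ne ((List.idxOf_inj (hw.1 x)).1 h)
    simp only [hxy, hxy.symm, true_and]
    omega
  · intro k p hp hadj i j hij
    have hmono : StrictMono fun i => w.idxOf (p i) :=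
      Fin.strictMono_iff_lt_succ.2 fun i => (hp i).2
    have hanti : ∀ u, u <+: w → Antitone fun i => u.count (p i) := fun u hu =>
      Fin.antitone_iff_succ_le.2 fun i => (hw.leads_of_adj (hp i).1 (hp i).2 u hu).1
    have hends : Leads w (p 0) (p (Fin.last k)) :=
      hw.leads_of_adj hadj (hmono ((Fin.zero_le i).trans_lt (hij.trans_le (Fin.le_last j))))
    have hpij : Leads w (p i) (p j) := fun u hu => by
      have := (hends u hu).2
      have h0i : u.count (p i) ≤ u.count (p 0) := hanti u hu (Fin.zero_le i)
      have hjk : u.count (p (Fin.last k)) ≤ u.count (p j) := hanti u hu (Fin.le_last j)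
      exact ⟨hanti u hu hij.le, by omega⟩
    have hne : p i ≠ p j := fun h => (hmono hij).ne (congrArg (w.idxOf ·) h)
    exact ⟨(hw.2 _ _ hne).1 ((alternates_iff_leads hne).2 (Or.inl hpij)), hmono hij⟩

end Leads

/-- Reverses the edges at `s`; intended for a source `s`, which becomes a sink. -/
def flipSource (o : V → V → Prop) (s : V) : V → V → Prop :=
  fun x y => (y = s ∧ o s x) ∨ (x ≠ s ∧ y ≠ s ∧ o x y)

section flipSource

variable {G : SimpleGraph V} {o : V → V → Prop} {s : V}

theorem flipSource_iff_of_ne {x y : V} (hy : y ≠ s) : flipSource o s x y ↔ x ≠ s ∧ o x y := by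
  simp [flipSource, hy]

theorem flipSource_self_right_iff {x : V} : flipSource o s x s ↔ o s x := by
  simp [flipSource]

theorem ne_of_flipSource (hs : ∀ x, ¬ o x s) {x y : V} (h : flipSource o s x y) : x ≠ s := by
  rintro rfl
  rcases h with ⟨-, h⟩ | ⟨h, -⟩
  exacts [hs x h, h rfl]

theorem transGen_of_transGen_flipSource {x y : V} (h : Relation.TransGen (flipSource o s) x y)
    (hy : y ≠ s) : Relation.TransGen o x y := by
  induction h with
  | single h => exact .single ((flipSource_iff_of_ne hy).1 h).2
  | tail _ h ih =>
    obtain ⟨hz, h⟩ := (flipSource_iff_of_ne hy).1 h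
    exact (ih hz).tail h

theorem IsOrientationOf.flipSource (ho : IsOrientationOf G o) (hs : ∀ x, ¬ o x s) :
    IsOrientationOf G (flipSource o s) := by
  have hout : ∀ x, G.Adj s x → o s x := fun x h => (ho.2 s x h).2 (hs x)
  refine ⟨?_, fun x y hxy => ?_⟩
  · rintro x y (⟨rfl, h⟩ | ⟨-, -, h⟩)
    exacts [(ho.1 _ _ h).symm, ho.1 _ _ h]
  rcases eq_or_ne x s with rfl | hx
  · simp [flipSource, hxy.ne', hout y hxy]
  rcases eq_or_ne y s with rfl | hy
  · simp [flipSource, hx, hout x hxy.symm]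
  rw [flipSource_iff_of_ne hy, flipSource_iff_of_ne hx]
  simp only [hx, hy, ne_eq, not_false_eq_true, true_and]
  exact ho.2 x y hxy

theorem Acyclic.flipSource (hac : Acyclic o) (hs : ∀ x, ¬ o x s) : Acyclic (flipSource o s) := by
  intro x hx
  obtain ⟨y, hxy, -⟩ := Relation.TransGen.head'_iff.1 hx
  exact hac x (transGen_of_transGen_flipSource hx (ne_of_flipSource hs hxy))

theorem ShortcutFree.cons (h : ShortcutFree G o) {k : ℕ} {p : Fin (k + 1) → V}
    (hs : o s (p 0)) (hp : ∀ i : Fin k, o (p i.castSucc) (p i.succ))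
    (hadj : G.Adj s (p (Fin.last k))) :
    (∀ i, o s (p i)) ∧ ∀ i j, i < j → o (p i) (p j) := by
  let q : Fin (k + 2) → V := Fin.cons s p
  have hstep : ∀ i : Fin (k + 1), o (q i.castSucc) (q i.succ) := by
    intro i
    cases i using Fin.cases with
    | zero => simpa [q] using hs
    | succ i => simpa [q, ← Fin.succ_castSucc] using hp i
  have hq := h (k + 1) q hstep (by simpa [q] using hadj)
  exact ⟨fun i => by simpa [q] using hq 0 i.succ i.succ_pos,
    fun i j hij => by simpa [q] using hq i.succ j.succ (Fin.succ_lt_succ_iff.2 hij)⟩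

theorem ShortcutFree.flipSource (hsf : ShortcutFree G o) (ho : IsOrientationOf G o)
    (hs : ∀ x, ¬ o x s) : ShortcutFree G (flipSource o s) := by
  intro k p hp hadj i j hij
  have hne : ∀ i : Fin k, p i.castSucc ≠ s := fun i => ne_of_flipSource hs (hp i)
  by_cases hlast : p (Fin.last k) = s
  · -- `s → p 0 → ⋯ → p (k - 1)` is a path of `o` whose endpoints are adjacent.
    obtain _ | k := k
    · exact absurd (Subsingleton.elim (α := Fin 1) i j) hij.ne
    have hout : ∀ x, G.Adj s x → o s x := fun x h => (ho.2 s x h).2 (hs x)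
    have hstep : ∀ m : Fin k, o (p m.castSucc.castSucc) (p m.succ.castSucc) := fun m =>
      ((flipSource_iff_of_ne (hne m.succ)).1 (hp m.castSucc)).2
    have hadj' : G.Adj s (p (Fin.last k).castSucc) := by
      have := hp (Fin.last k)
      rw [Fin.succ_last, hlast, flipSource_self_right_iff] at this
      exact ho.1 _ _ this
    obtain ⟨hfrom, hpath⟩ := hsf.cons (p := fun m => p m.castSucc)
      (hout _ (hlast ▸ hadj.symm)) hstep hadj'
    induction j using Fin.lastCases with
    | last =>
      obtain ⟨i, rfl⟩ := Fin.exists_castSucc_eq.2 hij.ne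
      rw [hlast]
      exact flipSource_self_right_iff.2 (hfrom i)
    | cast j =>
      obtain ⟨i, rfl⟩ := Fin.exists_castSucc_eq.2 (hij.trans (Fin.castSucc_lt_last j)).ne
      exact (flipSource_iff_of_ne (hne j)).2 ⟨hne i, hpath i j (Fin.castSucc_lt_castSucc_iff.1 hij)⟩
  · have hall : ∀ i, p i ≠ s := Fin.lastCases hlast hne
    have := hsf k p (fun i => ((flipSource_iff_of_ne (hall _)).1 (hp i)).2) hadj i j hij
    exact (flipSource_iff_of_ne (hall j)).2 ⟨hall i, this⟩

theorem SemiTransitive.flipSource (h : SemiTransitive G o) (hs : ∀ x, ¬ o x s) :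
    SemiTransitive G (flipSource o s) :=
  ⟨h.1.flipSource hs, h.2.1.flipSource hs, ShortcutFree.flipSource h.2.2 h.1 hs⟩

theorem flipSource_self_right_of_adj (ho : IsOrientationOf G o) (hs : ∀ x, ¬ o x s) {x : V}
    (hx : G.Adj s x) : flipSource o s x s :=
  flipSource_self_right_iff.2 ((ho.2 s x hx).2 (hs x))

theorem ncard_transGen_flipSource_lt [Finite V] (hs : ∀ x, ¬ o x s) {v : V}
    (hsv : Relation.TransGen o s v) :
    {u | Relation.TransGen (flipSource o s) u v}.ncard < {u | Relation.TransGen o u v}.ncard := by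
  have hvs : v ≠ s := by
    rintro rfl
    obtain ⟨x, -, hx⟩ := Relation.TransGen.tail'_iff.1 hsv
    exact hs x hx
  have hsub : {u | Relation.TransGen (flipSource o s) u v} ⊆ {u | Relation.TransGen o u v} :=
    fun u hu => transGen_of_transGen_flipSource hu hvs
  refine Set.ncard_lt_ncard ((Set.ssubset_iff_of_subset hsub).2 ⟨s, hsv, fun hs' => ?_⟩)
    (Set.toFinite _)
  obtain ⟨x, hx, -⟩ := Relation.TransGen.head'_iff.1 hs'
  exact ne_of_flipSource hs hx rfl

end flipSource

theorem SemiTransitive.exists_sink [Finite V] {G : SimpleGraph V} {o : V → V → Prop}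
    (h : SemiTransitive G o) (v : V) :
    ∃ o' : V → V → Prop, SemiTransitive G o' ∧ ∀ u : V, G.Adj v u → o' u v := by
  induction hn : {u | Relation.TransGen o u v}.ncard using Nat.strong_induction_on
    generalizing o with
  | _ n ih =>
  by_cases hanc : ∃ u, Relation.TransGen o u v
  · obtain ⟨s, hsv, hmin⟩ := h.2.1.wellFounded_transGen.has_min _ hanc
    have hs : ∀ x, ¬ o x s := fun x hx => hmin x (.head hx hsv) (.single hx)
    exact ih _ (hn ▸ ncard_transGen_flipSource_lt hs hsv) (h.flipSource hs) rfl
  · have hv : ∀ x, ¬ o x v := fun x hx => hanc ⟨x, .single hx⟩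
    exact ⟨_, h.flipSource hv, fun u => flipSource_self_right_of_adj h.1 hv⟩

/-- Every word-representable graph has a semi-transitive orientation in which any
prescribed vertex `v` is a sink. -/
theorem exists_semiTransitive_sink [Fintype V] [DecidableEq V] (G : SimpleGraph V)
    (h : WordRepresentable G) (v : V) :
    ∃ o : V → V → Prop, SemiTransitive G o ∧ ∀ u : V, G.Adj v u → o u v := by
  obtain ⟨w, hw⟩ := h
  exact hw.semiTransitive_s6.exists_sink v

end WordRepr
end

section
/- If a finite simple graph G is word-representable, then for every vertex v of G the subgraph of G induced by the neighbourhood of v is a comparability graph. -/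
namespace WordRepr

variable {V : Type*}

/-- A graph is a comparability graph if adjacency of distinct vertices coincides with
comparability in some strict partial order. -/
def IsComparabilityGraph {W : Type*} (H : SimpleGraph W) : Prop :=
  ∃ lt : W → W → Prop, (∀ a, ¬ lt a a) ∧ (∀ a b c, lt a b → lt b c → lt a c) ∧
    ∀ a b : W, a ≠ b → (H.Adj a b ↔ lt a b ∨ lt b a)

/-!
Adding to a representing word the letters in order of first occurrence (in front) and of last
occurrence (at the end) keeps it representing, so we may assume it has the form
`v g₁ v g₂ ⋯ v gₘ v` with `m ≥ 1` and `v ∉ gᵢ`. A neighbour of `v` alternates with `v`, hence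
occurs exactly once in every `gᵢ`; two neighbours then alternate iff they occur in the same order
in every `gᵢ`. So orienting each edge of the neighbourhood by the order of its ends in `g₁` is
transitive: if `x y` and `y z` are edges with `x` before `y` before `z` in `g₁`, the same holds in
every `gᵢ`, so `x` and `z` alternate.
-/
theorem _root_.List.filter_dedup {α : Type*} [DecidableEq α] (p : α → Bool) (l : List α) :
    l.dedup.filter p = (l.filter p).dedup := by
  induction l with
  | nil => simp
  | cons c t ih =>
    by_cases hc : c ∈ t <;> by_cases hp : p c <;>
      simp [List.dedup_cons_of_mem, List.dedup_cons_of_notMem, hc, hp, ih]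

theorem _root_.List.getLast?_dedup {α : Type*} [DecidableEq α] (l : List α) :
    l.dedup.getLast? = l.getLast? := by
  induction l with
  | nil => simp
  | cons c t ih =>
    by_cases hc : c ∈ t
    · obtain ⟨d, t', rfl⟩ := List.exists_cons_of_ne_nil (List.ne_nil_of_mem hc)
      rw [List.dedup_cons_of_mem hc, ih, List.getLast?_cons_cons]
    · rw [List.dedup_cons_of_notMem hc, List.getLast?_cons, List.getLast?_cons, ih]

theorem _root_.List.Nodup.head?_ne_getLast? {α : Type*} {l : List α} (hl : l.Nodup) {a b : α}
    (ha : a ∈ l) (hb : b ∈ l) (hab : a ≠ b) : ∀ x ∈ l.head?, ∀ y ∈ l.getLast?, x ≠ y := by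
  obtain _ | ⟨c, t⟩ := l
  · simp at ha
  intro x hx y hy
  obtain rfl : c = x := by simpa using hx
  obtain _ | ⟨d, t'⟩ := t
  · simp_all
  have hy' : y ∈ d :: t' := List.mem_of_getLast? (by simpa [List.getLast?_cons_cons] using hy)
  rintro rfl
  exact (List.nodup_cons.mp hl).1 hy'

/-- `l.dedup` ends with the last entry of `l`, and starts with a different one as soon as `l` has
two distinct entries. -/
theorem _root_.List.isChain_ne_append_dedup {α : Type*} [DecidableEq α] {l : List α} {a b : α}
    (ha : a ∈ l) (hb : b ∈ l) (hab : a ≠ b) :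
    (l ++ l.dedup).IsChain (· ≠ ·) ↔ l.IsChain (· ≠ ·) := by
  refine ⟨fun h => (List.isChain_append.mp h).1, fun h => List.isChain_append.mpr
    ⟨h, (List.nodup_dedup l).isChain, fun x hx y hy => ?_⟩⟩
  rw [← List.getLast?_dedup] at hx
  exact ((List.nodup_dedup l).head?_ne_getLast? (List.mem_dedup.mpr ha)
    (List.mem_dedup.mpr hb) hab y hy x hx).symm

theorem _root_.List.isChain_ne_flatten_iff {α : Type*} {a b : α} (hab : a ≠ b)
    {L : List (List α)} (hL : ∀ q ∈ L, q = [a, b] ∨ q = [b, a]) :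
    L.flatten.IsChain (· ≠ ·) ↔ ∃ q, ∀ q' ∈ L, q' = q := by
  have hnil : [] ∉ L := fun h => by rcases hL _ h with h | h <;> simp at h
  have hblock : ∀ q ∈ L, q.IsChain (· ≠ ·) := by
    intro q hq
    rcases hL q hq with rfl | rfl <;> simp [hab, hab.symm]
  have hjunction : ∀ q ∈ L, ∀ q' ∈ L,
      ((∀ x ∈ q.getLast?, ∀ y ∈ q'.head?, x ≠ y) ↔ q = q') := by
    intro q hq q' hq'
    rcases hL q hq with rfl | rfl <;> rcases hL q' hq' with rfl | rfl <;> simp [hab, hab.symm]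
  rw [List.isChain_flatten hnil, and_iff_right hblock, List.IsChain.iff_mem,
    List.IsChain.iff (S := fun q q' => q ∈ L ∧ q' ∈ L ∧ q = q')
      fun q q' => and_congr_right fun hq => and_congr_right fun hq' => hjunction q hq q' hq',
    ← List.IsChain.iff_mem, List.isChain_eq_iff_eq_replicate]
  cases L with
  | nil => simp
  | cons c L => simp [List.replicate_succ, List.eq_replicate_iff]

theorem _root_.List.eq_one_of_isChain_ne_replicate {α : Type*} {a v : α} {n : ℕ}
    (h : (v :: List.replicate n a ++ [v]).IsChain (· ≠ ·)) : n = 1 := by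
  match n, h with
  | 0, h => simp at h
  | 1, _ => rfl
  | n + 2, h => simp [List.replicate_succ] at h

section Alternation

variable [DecidableEq V] {a b : V} {w g : List V}

def pairSubword (w : List V) (a b : V) : List V :=
  w.filter fun z => decide (z = a ∨ z = b)

theorem alternates_iff_isChain : Alternates w a b ↔ (pairSubword w a b).IsChain (· ≠ ·) :=
  Iff.rfl

theorem pairSubword_comm (w : List V) (a b : V) : pairSubword w a b = pairSubword w b a := by
  simp only [pairSubword, or_comm]

theorem pairSubword_cons_left (a b : V) (t : List V) :
    pairSubword (a :: t) a b = a :: pairSubword t a b := by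
  simp [pairSubword]

theorem pairSubword_of_notMem_right (hb : b ∉ w) :
    pairSubword w a b = List.replicate (w.count a) a := by
  rw [pairSubword, ← List.filter_eq]
  exact List.filter_congr fun z hz => by simp [show z ≠ b from fun h => hb (h ▸ hz)]

theorem pairSubword_eq_ite (hab : a ≠ b) :
    ∀ {g : List V}, g.count a = 1 → g.count b = 1 →
      pairSubword g a b = if g.idxOf a < g.idxOf b then [a, b] else [b, a]
  | [], ha, _ => by simp at ha
  | c :: t, ha, hb => by
    by_cases hca : c = a
    · subst hca
      have hat : c ∉ t := List.count_eq_zero.mp (by simpa using ha)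
      have hbt : t.count b = 1 := by simpa [hab] using hb
      rw [pairSubword_cons_left, pairSubword_comm, pairSubword_of_notMem_right hat, hbt,
        List.idxOf_cons_self, List.idxOf_cons_ne _ hab, if_pos (Nat.succ_pos _)]
      rfl
    by_cases hcb : c = b
    · subst hcb
      have hbt : c ∉ t := List.count_eq_zero.mp (by simpa using hb)
      have hat : t.count a = 1 := by simpa [hca] using ha
      rw [pairSubword_comm, pairSubword_cons_left, pairSubword_comm t,
        pairSubword_of_notMem_right hbt, hat,
        List.idxOf_cons_self, List.idxOf_cons_ne _ hca, if_neg (Nat.not_lt_zero _)]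
      rfl
    have hat : t.count a = 1 := by simpa [hca] using ha
    have hbt : t.count b = 1 := by simpa [hcb] using hb
    rw [List.idxOf_cons_ne _ hca, List.idxOf_cons_ne _ hcb]
    simp only [Nat.succ_lt_succ_iff]
    rw [← pairSubword_eq_ite hab hat hbt]
    simp [pairSubword, hca, hcb]

theorem pairSubword_eq_pair_iff (hab : a ≠ b) (ha : g.count a = 1) (hb : g.count b = 1) :
    pairSubword g a b = [a, b] ↔ g.idxOf a < g.idxOf b := by
  rw [pairSubword_eq_ite hab ha hb]
  split_ifs with h <;> simp [h, hab]

theorem Alternates.infix {u : List V} (h : Alternates w a b) (hu : u <:+: w) :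
    Alternates u a b :=
  List.IsChain.infix h (hu.filter _)

theorem alternates_reverse : Alternates w.reverse a b ↔ Alternates w a b := by
  rw [alternates_iff_isChain, alternates_iff_isChain, pairSubword, List.filter_reverse,
    List.isChain_reverse]
  exact List.IsChain.iff fun _ _ => ne_comm

theorem alternates_append_dedup (ha : a ∈ w) (hb : b ∈ w) (hab : a ≠ b) :
    Alternates (w ++ w.dedup) a b ↔ Alternates w a b := by
  rw [alternates_iff_isChain, alternates_iff_isChain, pairSubword, List.filter_append,
    List.filter_dedup]
  exact List.isChain_ne_append_dedup (List.mem_filter.mpr ⟨ha, by simp⟩)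
    (List.mem_filter.mpr ⟨hb, by simp⟩) hab
end Alternation

section Normalization

variable [DecidableEq V] {G : SimpleGraph V} {w : List V}

theorem Represents.reverse (h : Represents G w) : Represents G w.reverse :=
  ⟨fun v => List.mem_reverse.mpr (h.1 v), fun x y hxy => alternates_reverse.trans (h.2 x y hxy)⟩

theorem Represents.append_dedup (h : Represents G w) : Represents G (w ++ w.dedup) :=
  ⟨fun v => List.mem_append_left _ (h.1 v),
    fun x y hxy => (alternates_append_dedup (h.1 x) (h.1 y) hxy).trans (h.2 x y hxy)⟩

theorem Represents.of_infix_of_infix {u W : List V} (hw : Represents G w) (hu : Represents G u)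
    (hwW : w <:+: W) (hWu : W <:+: u) : Represents G W :=
  ⟨fun v => hwW.subset (hw.1 v), fun x y hxy =>
    ⟨fun h => (hw.2 x y hxy).mp (h.infix hwW), fun h => ((hu.2 x y hxy).mpr h).infix hWu⟩⟩

theorem Represents.exists_cons_append_singleton (h : Represents G w) (v : V) :
    ∃ u, Represents G (v :: u ++ [v]) := by
  have hext := h.append_dedup.reverse.append_dedup.reverse
  rw [List.reverse_append, List.reverse_reverse] at hext
  obtain ⟨P, P', hP⟩ := List.append_of_mem (a := v) (l := (w ++ w.dedup).reverse.dedup.reverse)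
    (by simpa using h.1 v)
  obtain ⟨S, S', hS⟩ := List.append_of_mem (List.mem_dedup.mpr (h.1 v))
  refine ⟨P' ++ w ++ S, h.of_infix_of_infix hext ⟨v :: P', S ++ [v], by simp⟩ ⟨P, S', ?_⟩⟩
  rw [hP, hS]
  simp

end Normalization

def delimited (v : V) (gs : List (List V)) : List V :=
  v :: gs.flatMap (· ++ [v])

theorem infix_delimited {v : V} {g : List V} {gs : List (List V)} (hg : g ∈ gs) :
    v :: g ++ [v] <:+: delimited v gs := by
  obtain ⟨s, t, rfl⟩ := List.append_of_mem hg
  have : v :: s.flatMap (· ++ [v]) = s.flatMap (v :: ·) ++ [v] := by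
    induction s with
    | nil => rfl
    | cons g s ih => simp [ih]
  refine ⟨s.flatMap (v :: ·), t.flatMap (· ++ [v]), ?_⟩
  rw [delimited, List.flatMap_append, ← List.cons_append, this]
  simp

section Delimited

variable [DecidableEq V] {G : SimpleGraph V} {v a b : V} {g g₁ : List V} {gs : List (List V)}

theorem exists_delimited_eq (v : V) (u : List V) :
    ∃ gs, gs ≠ [] ∧ (∀ g ∈ gs, v ∉ g) ∧ v :: u ++ [v] = delimited v gs := by
  suffices ∀ u : List V, ∃ gs, gs ≠ [] ∧ (∀ g ∈ gs, v ∉ g) ∧ u ++ [v] = gs.flatMap (· ++ [v]) by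
    obtain ⟨gs, hne, hv, h⟩ := this u
    exact ⟨gs, hne, hv, by rw [delimited, ← h]; rfl⟩
  intro u
  induction u with
  | nil => exact ⟨[[]], by simp, by simp, by simp⟩
  | cons c t ih =>
    obtain ⟨_ | ⟨g, gs⟩, hne, hv, h⟩ := ih
    · exact absurd rfl hne
    by_cases hc : c = v
    · subst hc
      exact ⟨[] :: g :: gs, by simp, by simpa using hv, by simp [h]⟩
    · refine ⟨(c :: g) :: gs, by simp, ?_, by simpa using h⟩
      simpa [Ne.symm hc] using hv

theorem pairSubword_delimited (hav : a ≠ v) (hbv : b ≠ v) :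
    pairSubword (delimited v gs) a b = (gs.map (pairSubword · a b)).flatten := by
  simp only [delimited, pairSubword, List.filter_cons, List.flatMap_def, List.filter_flatten,
    List.map_map]
  simp [Function.comp_def, Ne.symm hav, Ne.symm hbv]

theorem count_eq_one_of_alternates (hv : ∀ g ∈ gs, v ∉ g)
    (h : Alternates (delimited v gs) a v) (hg : g ∈ gs) : g.count a = 1 := by
  have hchain := alternates_iff_isChain.mp (h.infix (infix_delimited hg))
  have hsplit : pairSubword (v :: g ++ [v]) a v = v :: pairSubword g a v ++ [v] := by
    simp [pairSubword]
  rw [hsplit, pairSubword_of_notMem_right (hv g hg)] at hchain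
  exact List.eq_one_of_isChain_ne_replicate hchain

theorem alternates_delimited_iff (hab : a ≠ b) (hav : a ≠ v) (hbv : b ≠ v)
    (hcount : ∀ g ∈ gs, g.count a = 1 ∧ g.count b = 1) :
    Alternates (delimited v gs) a b ↔ ∃ q, ∀ g ∈ gs, pairSubword g a b = q := by
  have hblocks : ∀ q ∈ gs.map (pairSubword · a b), q = [a, b] ∨ q = [b, a] := by
    simp only [List.mem_map]
    rintro _ ⟨g, hg, rfl⟩
    rw [pairSubword_eq_ite hab (hcount g hg).1 (hcount g hg).2]
    split_ifs <;> simp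
  rw [alternates_iff_isChain, pairSubword_delimited hav hbv,
    List.isChain_ne_flatten_iff hab hblocks]
  simp

theorem alternates_delimited_iff_forall_idxOf_lt (hab : a ≠ b) (hav : a ≠ v) (hbv : b ≠ v)
    (hcount : ∀ g ∈ gs, g.count a = 1 ∧ g.count b = 1) (hg₁ : g₁ ∈ gs)
    (h₁ : g₁.idxOf a < g₁.idxOf b) :
    Alternates (delimited v gs) a b ↔ ∀ g ∈ gs, g.idxOf a < g.idxOf b := by
  have hpair : ∀ g ∈ gs, (pairSubword g a b = [a, b] ↔ g.idxOf a < g.idxOf b) :=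
    fun g hg => pairSubword_eq_pair_iff hab (hcount g hg).1 (hcount g hg).2
  rw [alternates_delimited_iff hab hav hbv hcount]
  refine ⟨fun ⟨q, hq⟩ g hg => ?_, fun h => ⟨[a, b], fun g hg => (hpair g hg).mpr (h g hg)⟩⟩
  rw [← hpair g hg, hq g hg, ← hq g₁ hg₁, hpair g₁ hg₁]
  exact h₁

theorem Represents.count_eq_one (hW : Represents G (delimited v gs)) (hv : ∀ g ∈ gs, v ∉ g)
    (ha : G.Adj v a) (hg : g ∈ gs) : g.count a = 1 :=
  count_eq_one_of_alternates hv ((hW.2 a v ha.ne.symm).mpr ha.symm) hg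

theorem Represents.adj_iff_forall_idxOf_lt (hW : Represents G (delimited v gs))
    (hv : ∀ g ∈ gs, v ∉ g) (hg₁ : g₁ ∈ gs) (ha : G.Adj v a) (hb : G.Adj v b) (hab : a ≠ b)
    (h₁ : g₁.idxOf a < g₁.idxOf b) : G.Adj a b ↔ ∀ g ∈ gs, g.idxOf a < g.idxOf b :=
  (hW.2 a b hab).symm.trans <| alternates_delimited_iff_forall_idxOf_lt hab ha.ne.symm
    hb.ne.symm (fun _ hg => ⟨hW.count_eq_one hv ha hg, hW.count_eq_one hv hb hg⟩) hg₁ h₁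

end Delimited

theorem isComparabilityGraph_of_injective {W α : Type*} [LinearOrder α] (H : SimpleGraph W)
    (f : W → α) (hf : Function.Injective f)
    (htrans : ∀ a b c, H.Adj a b → H.Adj b c → f a < f b → f b < f c → H.Adj a c) :
    IsComparabilityGraph H :=
  ⟨fun a b => H.Adj a b ∧ f a < f b, fun _ h => h.1.ne rfl,
    fun a b c hab hbc => ⟨htrans a b c hab.1 hbc.1 hab.2 hbc.2, hab.2.trans hbc.2⟩,
    fun _ _ hab => ⟨fun h => (lt_or_gt_of_ne (hf.ne hab)).imp (⟨h, ·⟩) (⟨h.symm, ·⟩),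
      by rintro (h | h); exacts [h.1, h.1.symm]⟩⟩

theorem neighborhood_comparability_general [DecidableEq V] (G : SimpleGraph V)
    (h : WordRepresentable G) (v : V) :
    IsComparabilityGraph (G.induce (G.neighborSet v)) := by
  obtain ⟨w, hw⟩ := h
  obtain ⟨u, hu⟩ := hw.exists_cons_append_singleton v
  obtain ⟨gs, hne, hv, hgs⟩ := exists_delimited_eq v u
  rw [hgs] at hu
  obtain ⟨g₁, hg₁⟩ := List.exists_mem_of_ne_nil gs hne
  have hmem : ∀ a : G.neighborSet v, (a : V) ∈ g₁ := fun a =>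
    List.count_pos_iff.mp (by rw [hu.count_eq_one hv a.2 hg₁]; exact one_pos)
  refine isComparabilityGraph_of_injective _ (fun a => g₁.idxOf (a : V))
    (fun a b h => Subtype.ext ((List.idxOf_inj (hmem a)).mp h)) ?_
  intro ⟨a, ha⟩ ⟨b, hb⟩ ⟨c, hc⟩ (hab : G.Adj a b) (hbc : G.Adj b c) h₁ h₂
  have hac : a ≠ c := by
    rintro rfl
    exact lt_asymm h₁ h₂
  rw [SimpleGraph.induce_adj, hu.adj_iff_forall_idxOf_lt hv hg₁ ha hc hac (h₁.trans h₂)]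
  intro g hg
  exact ((hu.adj_iff_forall_idxOf_lt hv hg₁ ha hb hab.ne h₁).mp hab g hg).trans
    ((hu.adj_iff_forall_idxOf_lt hv hg₁ hb hc hbc.ne h₂).mp hbc g hg)

/-- In a word-representable graph, the neighbourhood of every vertex induces a
comparability graph. -/
theorem neighborhood_comparability [Fintype V] [DecidableEq V] (G : SimpleGraph V)
    (h : WordRepresentable G) (v : V) :
    IsComparabilityGraph (G.induce (G.neighborSet v)) :=
  neighborhood_comparability_general G h v

end WordRepr
end

section
/- Consider the graph G on vertex set {1,…,7} with edge set {{1,2},{1,4},{1,6},{2,3},{2,6},{2,7},{3,4},{3,5},{3,6},{3,7},{4,5},{5,6}} (Graph 12′). The orientation of G given by 1→2, 1→4, 1→6, 2→7, 2→6, 3→7, 3→2, 3→5, 3→6, 3→4, 5→6, 5→4 is semi-transitive; consequently G is word-representable. -/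
/-
The orientation has no directed path with three edges, so every directed path has at most two
edges; this also rules out directed cycles, since walking around a cycle three times would give
such a path. Semi-transitivity therefore only has to be checked on the directed paths
`a → b → c` with `a` adjacent to `c`, where it asks for the shortcut `a → c`: a finite check.
Word-representability is witnessed by an explicit word.
-/

namespace WordRepr

variable {V : Type*}

/-- Graph 12′ on the vertices `{1,…,7}` (vertex `i` is encoded as `i - 1 : Fin 7`). -/
def graph12' : SimpleGraph (Fin 7) :=
  SimpleGraph.fromRel fun x y =>
    ((x : ℕ) + 1, (y : ℕ) + 1) ∈
      [(1, 2), (1, 4), (1, 6), (2, 3), (2, 6), (2, 7), (3, 4), (3, 5), (3, 6), (3, 7),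
        (4, 5), (5, 6)]

/-- The orientation `1→2, 1→4, 1→6, 2→7, 2→6, 3→7, 3→2, 3→5, 3→6, 3→4, 5→6, 5→4`. -/
def orient12' (x y : Fin 7) : Prop :=
  ((x : ℕ) + 1, (y : ℕ) + 1) ∈
    [(1, 2), (1, 4), (1, 6), (2, 7), (2, 6), (3, 7), (3, 2), (3, 5), (3, 6), (3, 4),
      (5, 6), (5, 4)]

section Paths

variable {o : V → V → Prop}

lemma exists_rel_of_transGen_self {v : V} (h : Relation.TransGen o v v) :
    ∃ b, o v b ∧ Relation.TransGen o b b := by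
  obtain ⟨b, hvb, hbv⟩ := Relation.TransGen.head'_iff.mp h
  exact ⟨b, hvb, Relation.TransGen.tail' hbv hvb⟩

lemma acyclic_of_no_three_edge_path (h3 : ∀ a b c d, o a b → o b c → ¬ o c d) :
    Acyclic o := by
  intro v hv
  obtain ⟨b, hvb, hb⟩ := exists_rel_of_transGen_self hv
  obtain ⟨c, hbc, hc⟩ := exists_rel_of_transGen_self hb
  obtain ⟨d, hcd, -⟩ := exists_rel_of_transGen_self hc
  exact h3 v b c d hvb hbc hcd

lemma semiTransitive_of_no_three_edge_path {G : SimpleGraph V} (horient : IsOrientationOf G o)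
    (h3 : ∀ a b c d, o a b → o b c → ¬ o c d)
    (h2 : ∀ a b c, o a b → o b c → G.Adj a c → o a c) : SemiTransitive G o := by
  refine ⟨horient, acyclic_of_no_three_edge_path h3, ?_⟩
  intro k p hpath hadj i j hij
  match k, p, hpath, hadj with
  | 0, _, _, _ => exact absurd hij (by omega)
  | 1, p, hpath, _ =>
    fin_cases i <;> fin_cases j <;> first | exact absurd hij (by decide) | exact hpath 0
  | 2, p, hpath, hadj =>
    fin_cases i <;> fin_cases j <;>
      first
      | exact absurd hij (by decide)
      | exact hpath 0
      | exact hpath 1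
      | exact h2 _ _ _ (hpath 0) (hpath 1) hadj
  | _ + 3, p, hpath, _ => exact absurd (hpath 2) (h3 _ _ _ _ (hpath 0) (hpath 1))

end Paths

instance [DecidableEq V] (w : List V) (x y : V) : Decidable (Alternates w x y) :=
  inferInstanceAs (Decidable (List.IsChain _ _))

instance : DecidableRel orient12' := fun _ _ => by unfold orient12'; infer_instance

instance : DecidableRel graph12'.Adj := fun _ _ =>
  decidable_of_iff' _ (SimpleGraph.fromRel_adj _ _ _)

lemma isOrientationOf_graph12' : IsOrientationOf graph12' orient12' :=
  ⟨by decide, by decide⟩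

lemma orient12'_no_three_edge_path :
    ∀ a b c d, orient12' a b → orient12' b c → ¬ orient12' c d := by
  decide

lemma orient12'_shortcut : ∀ a b c, orient12' a b → orient12' b c → graph12'.Adj a c →
    orient12' a c := by
  decide

lemma represents_graph12' : Represents graph12' [0, 3, 1, 5, 0, 6, 2, 1, 6, 4, 5, 3, 2, 4] :=
  ⟨by decide, by decide⟩

/-- The given orientation of Graph 12′ is semi-transitive; consequently Graph 12′ is
word-representable. -/
theorem graph12'_semiTransitive_and_wordRepresentable :
    SemiTransitive graph12' orient12' ∧ WordRepresentable graph12' :=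
  ⟨semiTransitive_of_no_three_edge_path isOrientationOf_graph12' orient12'_no_three_edge_path
      orient12'_shortcut, _, represents_graph12'⟩

end WordRepr
end
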